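/- (Conjugation symmetry of the distorted Fourier transform) Fix ω > 0 and let F = (f, conj(f))ᵀ for a Schwartz function f : ℝ → ℂ. Then for every ξ ∈ ℝ, ⟨F, σ₃ Ψ_{+,ω}(·,ξ)⟩ = - ((|ξ| - i√ω)²/(|ξ| + i√ω)²) · conj( ⟨F, σ₃ Ψ_{-,ω}(·,-ξ)⟩ ). -/

import Mathlib

open MeasureTheory

/-- First component of the distorted Fourier basis. -/
noncomputable def Psi1 (ω : ℝ) (x ξ : ℝ) : ℂ :=
  ((1 / Real.sqrt (2 * Real.pi) : ℝ) : ℂ) *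
    (((ξ : ℂ) + Complex.I * (Real.sqrt ω : ℂ) * (Real.tanh (Real.sqrt ω * x) : ℂ)) ^ 2 /
      (((|ξ| : ℝ) : ℂ) - Complex.I * (Real.sqrt ω : ℂ)) ^ 2) *
    Complex.exp (Complex.I * (x : ℂ) * (ξ : ℂ))

/-- Second component of the distorted Fourier basis. -/
noncomputable def Psi2 (ω : ℝ) (x ξ : ℝ) : ℂ :=
  ((1 / Real.sqrt (2 * Real.pi) : ℝ) : ℂ) *
    (((ω * (1 / Real.cosh (Real.sqrt ω * x)) ^ 2 : ℝ) : ℂ) /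
      (((|ξ| : ℝ) : ℂ) - Complex.I * (Real.sqrt ω : ℂ)) ^ 2) *
    Complex.exp (Complex.I * (x : ℂ) * (ξ : ℂ))

/-- ⟨F, σ₃Ψ_{+,ω}(·,ξ)⟩ for F = (f, conj f)ᵀ. -/
noncomputable def dFTplus (ω : ℝ) (f : ℝ → ℂ) (ξ : ℝ) : ℂ :=
  ∫ x : ℝ, (f x * (starRingEnd ℂ) (Psi1 ω x ξ)
    - (starRingEnd ℂ) (f x) * (starRingEnd ℂ) (Psi2 ω x ξ))

/-- ⟨F, σ₃Ψ_{-,ω}(·,ξ)⟩ for F = (f, conj f)ᵀ. -/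
noncomputable def dFTminus (ω : ℝ) (f : ℝ → ℂ) (ξ : ℝ) : ℂ :=
  ∫ x : ℝ, (f x * (starRingEnd ℂ) (Psi2 ω x ξ)
    - (starRingEnd ℂ) (f x) * (starRingEnd ℂ) (Psi1 ω x ξ))

/-!
The identity holds pointwise before integrating: complex conjugation turns `e^{ixξ}` into
`e^{-ixξ}` and `(ξ + i√ω tanh)²` into `(-ξ + i√ω tanh)²`, so `conj Ψⱼ(x, ξ)` differs from
`Ψⱼ(x, -ξ)` only through the denominator, by the factor `(|ξ| - i√ω)² / (|ξ| + i√ω)²`.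
Since conjugation and multiplication by a constant commute with the integral (also for
non-integrable integrands, where both sides are `0`), the two transforms are related by
the same factor and the sign of `σ₃`.
-/

-- Also true at `a = 0`, where both sides are the junk value `0`.
lemma conj_div_sq_eq_mul (m a : ℂ) :
    (starRingEnd ℂ) (m / a ^ 2) = a ^ 2 / (starRingEnd ℂ) a ^ 2 * ((starRingEnd ℂ) m / a ^ 2) := by
  rcases eq_or_ne a 0 with rfl | ha
  · simp
  · rw [map_div₀, map_pow]
    field_simp [(map_ne_zero (starRingEnd ℂ)).mpr ha]

lemma conj_exp_I_mul_mul (x ξ : ℝ) :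
    (starRingEnd ℂ) (Complex.exp (Complex.I * x * ξ)) = Complex.exp (Complex.I * x * (-ξ : ℝ)) := by
  rw [← Complex.exp_conj]
  simp only [map_mul, Complex.conj_I, Complex.conj_ofReal, Complex.ofReal_neg]
  ring_nf

lemma conj_abs_sub_I_mul_sqrt (ω ξ : ℝ) :
    (starRingEnd ℂ) ((|ξ| : ℝ) - Complex.I * Real.sqrt ω) = (|ξ| : ℝ) + Complex.I * Real.sqrt ω := by
  simp only [map_sub, map_mul, Complex.conj_ofReal, Complex.conj_I]
  ring

noncomputable def distortedPhase (ω ξ : ℝ) : ℂ :=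
  (((|ξ| : ℝ) : ℂ) - Complex.I * (Real.sqrt ω : ℂ)) ^ 2 /
    (((|ξ| : ℝ) : ℂ) + Complex.I * (Real.sqrt ω : ℂ)) ^ 2

lemma conj_Psi1 (ω x ξ : ℝ) :
    (starRingEnd ℂ) (Psi1 ω x ξ) = distortedPhase ω ξ * Psi1 ω x (-ξ) := by
  simp only [Psi1, distortedPhase, map_mul, conj_div_sq_eq_mul _ ((|ξ| : ℝ) - _),
    conj_abs_sub_I_mul_sqrt, conj_exp_I_mul_mul, Complex.conj_ofReal, abs_neg, map_pow, map_add,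
    Complex.conj_I, Complex.ofReal_neg]
  ring

lemma conj_Psi2 (ω x ξ : ℝ) :
    (starRingEnd ℂ) (Psi2 ω x ξ) = distortedPhase ω ξ * Psi2 ω x (-ξ) := by
  simp only [Psi2, distortedPhase, map_mul, conj_div_sq_eq_mul _ ((|ξ| : ℝ) - _),
    conj_abs_sub_I_mul_sqrt, conj_exp_I_mul_mul, Complex.conj_ofReal, abs_neg]
  ring

theorem dFTplus_eq_neg_distortedPhase_mul_conj_dFTminus (ω : ℝ) (f : ℝ → ℂ) (ξ : ℝ) :
    dFTplus ω f ξ = -(distortedPhase ω ξ * (starRingEnd ℂ) (dFTminus ω f (-ξ))) := by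
  rw [dFTminus, ← integral_conj, ← integral_const_mul, ← integral_neg, dFTplus]
  congr 1 with x
  simp only [map_sub, map_mul, Complex.conj_conj]
  simp only [conj_Psi1, conj_Psi2]
  ring

theorem distorted_fourier_conjugation_symmetry_general (ω : ℝ)
    (f : SchwartzMap ℝ ℂ) (ξ : ℝ) :
    dFTplus ω (fun x => f x) ξ
      = -(((((|ξ| : ℝ) : ℂ) - Complex.I * (Real.sqrt ω : ℂ)) ^ 2 /
            ((((|ξ| : ℝ) : ℂ) + Complex.I * (Real.sqrt ω : ℂ)) ^ 2)) *
          (starRingEnd ℂ) (dFTminus ω (fun x => f x) (-ξ))) :=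
  dFTplus_eq_neg_distortedPhase_mul_conj_dFTminus ω f ξ

/-- Conjugation symmetry of the distorted Fourier transform for J-invariant data
F = (f, conj f)ᵀ with f Schwartz. -/
theorem distorted_fourier_conjugation_symmetry (ω : ℝ) (hω : 0 < ω)
    (f : SchwartzMap ℝ ℂ) (ξ : ℝ) :
    dFTplus ω (fun x => f x) ξ
      = -(((((|ξ| : ℝ) : ℂ) - Complex.I * (Real.sqrt ω : ℂ)) ^ 2 /
            ((((|ξ| : ℝ) : ℂ) + Complex.I * (Real.sqrt ω : ℂ)) ^ 2)) *
          (starRingEnd ℂ) (dFTminus ω (fun x => f x) (-ξ))) :=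
  distorted_fourier_conjugation_symmetry_general ω f ξ
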